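/- For all complex x, y, the series ∑_{n=0}^∞ q^{n(n−1)/2} (x ⊞_q y)^n/[n]_q! converges absolutely and E_q(x) · E_q(y) = ∑_{n=0}^∞ q^{n(n−1)/2} (x ⊞_q y)^n/[n]_q!. -/

import Mathlib

/-!
`E_q(x) E_q(y)` is the Cauchy product of two absolutely convergent series. Writing `n = k + l`,
the identity `(k + l).choose 2 = k.choose 2 + l.choose 2 + k * l` shows that its `n`-th
coefficient is exactly the `k`-th summand of `q^(n choose 2) (x ⊞_q y)^n / [n]_q!`: the factor
`q^(k(k-n)) = q^(-kl)` in the coaddition power cancels the cross term `k * l`. Absolute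
convergence comes from `[n]_q! ≥ 1` and the ratio test, since the ratio
of consecutive terms of `q^(n choose 2) r^n` is `q^n r → 0`.
-/

open Finset Filter

/-- The q-number `[n]_q = (1 - q^n)/(1 - q)`. -/
noncomputable def qNum (q : ℝ) (n : ℕ) : ℝ := (1 - q ^ n) / (1 - q)

/-- The q-factorial `[n]_q! = ∏_{k=1}^n [k]_q`. -/
noncomputable def qFact (q : ℝ) (n : ℕ) : ℝ := ∏ k ∈ Finset.range n, qNum q (k + 1)

/-- The q-binomial coefficient `[n choose k]_q`. -/
noncomputable def qBinom (q : ℝ) (n k : ℕ) : ℝ := qFact q n / (qFact q k * qFact q (n - k))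

/-- The q-coaddition power `(x ⊞_q y)^n = ∑_{k=0}^n [n choose k]_q q^(k(k-n)) x^k y^(n-k)`. -/
noncomputable def coaddPow (q : ℝ) (x y : ℂ) (n : ℕ) : ℂ :=
  ∑ k ∈ Finset.range (n + 1),
    (qBinom q n k : ℂ) * (q : ℂ) ^ ((k : ℤ) * ((k : ℤ) - (n : ℤ))) * x ^ k * y ^ (n - k)

/-- The q-exponential `E_q(z) = ∑ q^(n(n-1)/2) z^n/[n]_q!`. -/
noncomputable def bigQExp (q : ℝ) (z : ℂ) : ℂ :=
  ∑' n : ℕ, (q : ℂ) ^ (n * (n - 1) / 2) * z ^ n / (qFact q n : ℂ)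

theorem Nat.choose_two_add (k l : ℕ) : (k + l).choose 2 = k.choose 2 + l.choose 2 + k * l := by
  induction l with
  | zero => simp
  | succ l ih =>
    rw [← add_assoc, Nat.choose_succ_succ', ih, Nat.choose_one_right, Nat.choose_succ_succ',
      Nat.choose_one_right]
    ring

theorem summable_pow_choose_two_mul_pow {q : ℝ} (hq0 : 0 ≤ q) (hq1 : q < 1) (r : ℝ) :
    Summable fun n : ℕ => q ^ n.choose 2 * r ^ n := by
  refine summable_of_ratio_norm_eventually_le (r := 1 / 2) (by norm_num) ?_
  have hratio : Tendsto (fun n : ℕ => ‖q ^ n * r‖) atTop (nhds 0) := by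
    simpa using ((tendsto_pow_atTop_nhds_zero_of_lt_one hq0 hq1).mul_const r).norm
  filter_upwards [hratio.eventually_lt_const (by norm_num : (0 : ℝ) < 1 / 2)] with n hn
  have hsucc : q ^ (n + 1).choose 2 * r ^ (n + 1) = q ^ n * r * (q ^ n.choose 2 * r ^ n) := by
    rw [Nat.choose_succ_succ', Nat.choose_one_right, pow_add, pow_succ]
    ring
  rw [hsucc, norm_mul]
  exact mul_le_mul_of_nonneg_right hn.le (norm_nonneg _)

section QFactorial

variable {q : ℝ}

theorem qFact_succ (n : ℕ) : qFact q (n + 1) = qFact q n * qNum q (n + 1) :=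
  prod_range_succ _ _

variable (hq0 : 0 < q) (hq1 : q < 1)
include hq0 hq1

theorem one_le_qNum_succ (n : ℕ) : 1 ≤ qNum q (n + 1) := by
  rw [qNum, le_div_iff₀ (by linarith), one_mul, sub_le_sub_iff_left]
  exact pow_le_of_le_one hq0.le hq1.le n.succ_ne_zero

theorem one_le_qFact (n : ℕ) : 1 ≤ qFact q n := by
  induction n with
  | zero => simp [qFact]
  | succ n ih => rw [qFact_succ]; nlinarith [one_le_qNum_succ hq0 hq1 n]

theorem qFact_pos (n : ℕ) : 0 < qFact q n :=
  one_pos.trans_le (one_le_qFact hq0 hq1 n)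

end QFactorial

noncomputable def qExpTerm (q : ℝ) (z : ℂ) (n : ℕ) : ℂ :=
  (q : ℂ) ^ n.choose 2 * z ^ n / (qFact q n : ℂ)

theorem bigQExp_eq_tsum_qExpTerm (q : ℝ) (z : ℂ) : bigQExp q z = ∑' n, qExpTerm q z n := by
  simp only [bigQExp, qExpTerm, Nat.choose_two_right]

section

variable {q : ℝ} (hq0 : 0 < q) (hq1 : q < 1)
include hq0 hq1

theorem norm_qExpTerm_le (z : ℂ) (n : ℕ) : ‖qExpTerm q z n‖ ≤ q ^ n.choose 2 * ‖z‖ ^ n := by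
  rw [qExpTerm, norm_div, norm_mul, norm_pow, norm_pow, Complex.norm_real, Complex.norm_real,
    Real.norm_of_nonneg hq0.le, Real.norm_of_nonneg (qFact_pos hq0 hq1 n).le]
  exact div_le_self (by positivity) (one_le_qFact hq0 hq1 n)

theorem summable_norm_qExpTerm (z : ℂ) : Summable fun n => ‖qExpTerm q z n‖ :=
  (summable_pow_choose_two_mul_pow hq0.le hq1 ‖z‖).of_nonneg_of_le (fun _ => norm_nonneg _)
    (norm_qExpTerm_le hq0 hq1 z)

theorem qExpTerm_mul_qExpTerm (x y : ℂ) (k l : ℕ) :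
    qExpTerm q x k * qExpTerm q y l =
      (q : ℂ) ^ (k + l).choose 2 * ((qBinom q (k + l) k : ℂ) *
        (q : ℂ) ^ ((k : ℤ) * ((k : ℤ) - ((k + l : ℕ) : ℤ))) * x ^ k * y ^ l) /
        (qFact q (k + l) : ℂ) := by
  have hq : (q : ℂ) ≠ 0 := by exact_mod_cast hq0.ne'
  have hfact (n : ℕ) : (qFact q n : ℂ) ≠ 0 := by exact_mod_cast (qFact_pos hq0 hq1 n).ne'
  have hcross : (q : ℂ) ^ ((k : ℤ) * ((k : ℤ) - ((k + l : ℕ) : ℤ))) = ((q : ℂ) ^ (k * l))⁻¹ := by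
    rw [← zpow_natCast, ← zpow_neg]
    push_cast
    ring_nf
  rw [qExpTerm, qExpTerm, qBinom, hcross, Nat.choose_two_add, pow_add, pow_add,
    Nat.add_sub_cancel_left]
  push_cast
  field_simp [hfact, pow_ne_zero _ hq]

theorem sum_range_qExpTerm_mul (x y : ℂ) (n : ℕ) :
    ∑ k ∈ range (n + 1), qExpTerm q x k * qExpTerm q y (n - k) =
      (q : ℂ) ^ n.choose 2 * coaddPow q x y n / (qFact q n : ℂ) := by
  rw [coaddPow, mul_sum, sum_div]
  refine sum_congr rfl fun k hk => ?_
  obtain ⟨l, rfl⟩ := Nat.exists_eq_add_of_le (Nat.lt_succ_iff.mp (mem_range.mp hk))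
  rw [Nat.add_sub_cancel_left, qExpTerm_mul_qExpTerm hq0 hq1]

end

theorem stmt_2 (q : ℝ) (hq0 : 0 < q) (hq1 : q < 1) (x y : ℂ) :
    Summable (fun n : ℕ => ‖(q : ℂ) ^ (n * (n - 1) / 2) * coaddPow q x y n / (qFact q n : ℂ)‖) ∧
      bigQExp q x * bigQExp q y =
        ∑' n : ℕ, (q : ℂ) ^ (n * (n - 1) / 2) * coaddPow q x y n / (qFact q n : ℂ) := by
  have hx := summable_norm_qExpTerm hq0 hq1 x
  have hy := summable_norm_qExpTerm hq0 hq1 y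
  simp only [← Nat.choose_two_right, ← sum_range_qExpTerm_mul hq0 hq1 x y]
  refine ⟨summable_norm_sum_mul_range_of_summable_norm hx hy, ?_⟩
  rw [bigQExp_eq_tsum_qExpTerm, bigQExp_eq_tsum_qExpTerm,
    tsum_mul_tsum_eq_tsum_sum_range_of_summable_norm hx hy]
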